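/- arXiv:1607.04604 — 2 statements merged into one kernel-verified Lean document; each statement's English description precedes it below -/
import Mathlib

section
/- For every natural number n and every natural number k, the sum over i from 0 to 2^k - 1 of floor((n+i)/2^(k+1)) equals n/2 - 2^k * Zigzag(n/2^(k+1)). -/
def Zigzag (x : ℚ) : ℚ := min (x - ⌊x⌋) (⌈x⌉ - x)

/-!
Write `n = 2m·q + r` with `0 ≤ r < 2m` (here `m = 2^k`). Each `⌊(n + i) / 2m⌋` with `i < m` is `q`
or `q + 1`, the latter for exactly `max 0 (r - m)` values of `i`. On the other side
`Zigzag (n / 2m) = min (r / 2m) (1 - r / 2m)`, so `m · Zigzag (n / 2m) = min (r / 2) (m - r / 2)`,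
and both sides equal `m·q + max 0 (r - m)`.
-/

open Finset

theorem zigzag_eq_min_fract (x : ℚ) : Zigzag x = min (Int.fract x) (1 - Int.fract x) := by
  rcases Int.fract_eq_zero_or_add_one_sub_ceil x with h | h
  · rw [← Int.self_sub_floor, sub_eq_zero] at h
    rw [Zigzag, h, Int.floor_intCast, Int.ceil_intCast]
    simp
  · rw [Zigzag, Int.self_sub_floor, h]
    congr 1
    ring

theorem Nat.sum_range_add_div (n : ℕ) {m N : ℕ} (hN : 0 < N) (h : m ≤ N) :
    ∑ i ∈ range m, (n + i) / N = m * (n / N) + (n % N + m - N) := by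
  have hr : n % N < N := Nat.mod_lt n hN
  induction m with
  | zero => simp; omega
  | succ m ih =>
    have hdiv : (n + m) / N = n / N + (n % N + m) / N := by
      conv_lhs => rw [← Nat.div_add_mod n N, add_assoc, Nat.mul_add_div hN]
    rw [sum_range_succ, ih (by omega), hdiv, Nat.succ_mul]
    rcases lt_or_ge (n % N + m) N with hlt | hge
    · rw [Nat.div_eq_of_lt hlt]
      omega
    · have hone : (n % N + m) / N = 1 := Nat.div_eq_of_lt_le (by omega) (by omega)
      omega

theorem Nat.cast_add_sub_two_mul {K : Type*} [Field K] [LinearOrder K] [IsOrderedRing K]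
    {r m : ℕ} (h : r < 2 * m) :
    ((r + m - 2 * m : ℕ) : K) = r / 2 - m * min ((r : K) / (2 * m)) (1 - r / (2 * m)) := by
  have hm : (0 : K) < m := by exact_mod_cast (show 0 < m by omega)
  have hhalf : (m : K) * (r / (2 * m)) = r / 2 := by field_simp
  rw [mul_min_of_nonneg _ _ hm.le, mul_one_sub, hhalf]
  rcases le_total r m with hrm | hmr
  · have : (r : K) ≤ m := by exact_mod_cast hrm
    rw [Nat.sub_eq_zero_of_le (by omega), min_eq_left (by linarith)]
    simp
  · have : (m : K) ≤ r := by exact_mod_cast hmr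
    rw [Nat.cast_sub (by omega), min_eq_right (by linarith)]
    push_cast
    ring

theorem sum_range_floor_add_div_two_mul (n : ℕ) {m : ℕ} (hm : 0 < m) :
    ((∑ i ∈ range m, ⌊((n : ℚ) + i) / (2 * m)⌋ : ℤ) : ℚ) = n / 2 - m * Zigzag (n / (2 * m)) := by
  have h2m : 2 * (m : ℚ) = ((2 * m : ℕ) : ℚ) := by push_cast; rfl
  have hfloor (i : ℕ) : ⌊((n : ℚ) + i) / (2 * m)⌋ = (((n + i) / (2 * m) : ℕ) : ℤ) := by
    rw [h2m, ← Nat.cast_add, Rat.floor_natCast_div_natCast, Int.natCast_div]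
  have hn : (n : ℚ) = ((2 * m * (n / (2 * m)) + n % (2 * m) : ℕ) : ℚ) := by
    rw [Nat.div_add_mod]
  have hr := Nat.cast_add_sub_two_mul (K := ℚ) (Nat.mod_lt n (show 0 < 2 * m by omega))
  rw [sum_congr rfl fun i _ => hfloor i, ← Nat.cast_sum,
    Nat.sum_range_add_div n (by omega) (by omega), zigzag_eq_min_fract, h2m,
    Int.fract_div_natCast_eq_div_natCast_mod, Int.cast_natCast, hn]
  push_cast at hr ⊢
  linear_combination hr

theorem sum_floor_pow_eq_half_sub_zigzag (n k : ℕ) :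
    ((∑ i ∈ Finset.range (2 ^ k), ⌊((n : ℚ) + i) / 2 ^ (k + 1)⌋ : ℤ) : ℚ)
      = (n : ℚ) / 2 - 2 ^ k * Zigzag ((n : ℚ) / 2 ^ (k + 1)) := by
  rw [pow_succ']
  exact_mod_cast sum_range_floor_add_div_two_mul n (Nat.two_pow_pos k)
end

section
/- Define W(n) = n*ceil(log2 n) - 2^(ceil(log2 n)) + 1 and let B satisfy the MergeSort best-case recurrence B(1)=0, B(n)=floor(n/2)+B(floor(n/2))+B(ceil(n/2)) for n >= 2. Then for every positive natural number n, (n-1)/2 <= 2*B(n) - W(n) <= n - 1. -/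
/-!
With `D n = 2 B(n) - W(n)`, the worst-case count `W` satisfies the MergeSort recurrence
`W n = n - 1 + W ⌊n/2⌋ + W ⌈n/2⌉`, so `D n = D ⌊n/2⌋ + D ⌈n/2⌉ + [n even]`.
Both bounds then follow by strong induction, the lower one in the stronger form `⌊n/2⌋ ≤ D n`.
-/

open Nat

def mergeSortWorstCase (n : ℕ) : ℚ := n * clog 2 n - 2 ^ clog 2 n + 1

lemma Rat.toNat_ceil_natCast_div_two (n : ℕ) : (⌈(n : ℚ) / 2⌉).toNat = (n + 1) / 2 := by
  have h := Rat.ceil_natCast_div_natCast n 2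
  push_cast at h
  rw [h]
  omega

/-- Besides `k = clog 2 m`, only `k = clog 2 m + 1` with `m = 2 ^ clog 2 m` is admissible, and it
gives the same value. -/
lemma mul_clog_sub_two_pow_clog {m k : ℕ} (hm : m ≤ 2 ^ k) (hk : 2 ^ k ≤ 2 * m) :
    (m : ℚ) * clog 2 m - 2 ^ clog 2 m = m * k - 2 ^ k := by
  set c := clog 2 m
  have hmc : m ≤ 2 ^ c := le_pow_clog one_lt_two m
  rcases (clog_le_of_le_pow hm).eq_or_lt with rfl | hck
  · rfl
  have h2c : 2 * 2 ^ c ≤ 2 ^ k := by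
    rw [← pow_succ']
    exact Nat.pow_le_pow_right two_pos hck
  have hpow : 2 ^ c = m := by omega
  obtain rfl : k = c + 1 := Nat.pow_right_injective le_rfl (by simp only [pow_succ]; omega)
  rw [← hpow]
  push_cast
  ring

lemma mergeSortWorstCase_eq_of_le_two_pow {m k : ℕ} (hm : m ≤ 2 ^ k) (hk : 2 ^ k ≤ 2 * m) :
    mergeSortWorstCase m = m * k - 2 ^ k + 1 := by
  rw [mergeSortWorstCase, mul_clog_sub_two_pow_clog hm hk]

lemma mergeSortWorstCase_rec {n : ℕ} (hn : 2 ≤ n) :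
    mergeSortWorstCase n =
      n - 1 + mergeSortWorstCase (n / 2) + mergeSortWorstCase ((n + 1) / 2) := by
  -- both halves lie between `2 ^ (k - 1)` and `2 ^ k`, so one exponent serves for both
  set k := clog 2 ((n + 1) / 2)
  have hclog : clog 2 n = k + 1 := clog_of_two_le one_lt_two hn
  have hlt : 2 ^ k < n := by simpa [hclog] using pow_pred_clog_lt_self one_lt_two hn
  have hle : (n + 1) / 2 ≤ 2 ^ k := le_pow_clog one_lt_two _
  rw [mergeSortWorstCase, hclog, mergeSortWorstCase_eq_of_le_two_pow (k := k) (by omega) (by omega),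
    mergeSortWorstCase_eq_of_le_two_pow (k := k) hle (by omega)]
  have hsum : ((n / 2 : ℕ) : ℚ) + ((n + 1) / 2 : ℕ) = n := by exact_mod_cast (by omega : _ = n)
  push_cast [pow_succ]
  linear_combination -(k : ℚ) * hsum

section HalvingRecurrence

variable {D : ℕ → ℚ} (hD1 : D 1 = 0)
  (hD : ∀ n, 2 ≤ n → D n = D (n / 2) + D ((n + 1) / 2) + (2 * (n / 2 : ℕ) + 1 - n))
include hD1 hD

lemma le_sub_one_of_halving_rec : ∀ n, 0 < n → D n ≤ n - 1 := by
  intro n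
  induction n using Nat.strong_induction_on with
  | _ n ih =>
  intro hn
  rcases (show n = 1 ∨ 2 ≤ n by omega) with rfl | hn2
  · simp [hD1]
  have ha := ih (n / 2) (by omega) (by omega)
  have hb := ih ((n + 1) / 2) (by omega) (by omega)
  have hsum : ((n / 2 : ℕ) : ℚ) + ((n + 1) / 2 : ℕ) = n := by exact_mod_cast (by omega : _ = n)
  have htwice : 2 * ((n / 2 : ℕ) : ℚ) ≤ n := by exact_mod_cast Nat.mul_div_le n 2
  rw [hD n hn2]
  linarith

lemma half_le_of_halving_rec : ∀ n, 0 < n → ((n / 2 : ℕ) : ℚ) ≤ D n := by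
  intro n
  induction n using Nat.strong_induction_on with
  | _ n ih =>
  intro hn
  rcases (show n = 1 ∨ 2 ≤ n by omega) with rfl | hn2
  · simp [hD1]
  have ha := ih (n / 2) (by omega) (by omega)
  have hb := ih ((n + 1) / 2) (by omega) (by omega)
  have hhalves : ((n / 2 / 2 : ℕ) : ℚ) + ((n + 1) / 2 / 2 : ℕ) + 2 * (n / 2 : ℕ) + 1
      ≥ (n / 2 : ℕ) + n := by
    exact_mod_cast (by omega : _ ≥ _)
  rw [hD n hn2]
  linarith

end HalvingRecurrence

theorem twoB_sub_W_bounds (B : ℕ → ℕ) (hB1 : B 1 = 0)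
    (hB : ∀ n, 2 ≤ n → B n = n / 2 + B (n / 2) + B ((⌈(n : ℚ) / 2⌉).toNat))
    (W : ℕ → ℚ) (hW : ∀ n, W n = (n : ℚ) * Nat.clog 2 n - 2 ^ Nat.clog 2 n + 1) :
    ∀ n : ℕ, 0 < n →
      ((n : ℚ) - 1) / 2 ≤ 2 * (B n : ℚ) - W n ∧ 2 * (B n : ℚ) - W n ≤ (n : ℚ) - 1 := by
  obtain rfl : W = mergeSortWorstCase := funext hW
  set D : ℕ → ℚ := fun n => 2 * (B n : ℚ) - mergeSortWorstCase n
  have hD1 : D 1 = 0 := by simp [D, hB1, mergeSortWorstCase]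
  have hD : ∀ n, 2 ≤ n → D n = D (n / 2) + D ((n + 1) / 2) + (2 * (n / 2 : ℕ) + 1 - n) := by
    intro n hn
    simp only [D, hB n hn, Rat.toNat_ceil_natCast_div_two, mergeSortWorstCase_rec hn]
    push_cast
    ring
  intro n hn
  have hhalf : ((n : ℚ) - 1) / 2 ≤ (n / 2 : ℕ) := by
    have : (n : ℚ) ≤ 2 * (n / 2 : ℕ) + 1 := by exact_mod_cast (by omega : n ≤ 2 * (n / 2) + 1)
    linarith
  exact ⟨hhalf.trans (half_le_of_halving_rec hD1 hD n hn), le_sub_one_of_halving_rec hD1 hD n hn⟩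
end
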